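/- Let ε > 0, let p_1 < p_2 < … < p_M be real numbers (M ≥ 2), and let f : [p_1, p_M] → ℝ be nondecreasing with f(p_{j+1}) − f(p_j) ≤ ε for each j ∈ {1,…,M−1}. Let v̂_1,…,v̂_M be arbitrary real numbers, let (w_1,…,w_M) be an isotonic regression of (v̂_1,…,v̂_M), and let g be the linear interpolant of the values w_j at the points p_j. Then sup_{p∈[p_1,p_M]} |g(p) − f(p)| ≤ 2ε + 3·max_{1≤j≤M} |v̂_j − f(p_j)|. -/

import Mathlib

/-!
Clipping an isotonic regression `w` of `v̂` at the nondecreasing sequences `f(p_j) ± D`,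
where `D = max_j |v̂_j - f(p_j)|`, keeps it nondecreasing and moves every coordinate towards
`v̂`, so by optimality no clipping happens: `|w_j - f(p_j)| ≤ D`. On a cell `[p_j, p_{j+1}]` the
interpolant lies between `w_j` and `w_{j+1}` and `f` between `f(p_j)` and `f(p_j) + ε`, which
gives `|g - f| ≤ ε + D`.
-/

open Finset

lemma sq_sub_min_le {v w u : ℝ} (h : v ≤ u) : (v - min w u) ^ 2 ≤ (v - w) ^ 2 := by
  rcases le_total w u with hwu | huw
  · rw [min_eq_left hwu]
  · rw [min_eq_right huw]
    nlinarith

lemma sq_sub_max_le {v w u : ℝ} (h : u ≤ v) : (v - max w u) ^ 2 ≤ (v - w) ^ 2 := by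
  rcases le_total u w with huw | hwu
  · rw [max_eq_left huw]
  · rw [max_eq_right hwu]
    nlinarith

def IsIsotonicRegression {ι : Type*} [Preorder ι] (s : Finset ι) (v w : ι → ℝ) : Prop :=
  MonotoneOn w s ∧
    ∀ w' : ι → ℝ, MonotoneOn w' s →
      ∑ i ∈ s, (v i - w i) ^ 2 ≤ ∑ i ∈ s, (v i - w' i) ^ 2

namespace IsIsotonicRegression

variable {ι : Type*} [Preorder ι] {s : Finset ι} {v w u : ι → ℝ} {k : ι}

lemma sq_sub_le_of_forall_sq_sub_le (hw : IsIsotonicRegression s v w) {w' : ι → ℝ}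
    (hw' : MonotoneOn w' s) (hle : ∀ i ∈ s, (v i - w' i) ^ 2 ≤ (v i - w i) ^ 2)
    (hk : k ∈ s) :
    (v k - w k) ^ 2 ≤ (v k - w' k) ^ 2 := by
  by_contra! hlt
  exact (sum_lt_sum hle ⟨k, hk, hlt⟩).not_ge (hw.2 w' hw')

lemma le_of_forall_le (hw : IsIsotonicRegression s v w) (hu : MonotoneOn u s)
    (hvu : ∀ i ∈ s, v i ≤ u i) (hk : k ∈ s) : w k ≤ u k := by
  by_contra! hlt
  have hclip := hw.sq_sub_le_of_forall_sq_sub_le (hw.1.min hu)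
    (fun i hi => sq_sub_min_le (hvu i hi)) hk
  rw [min_eq_right hlt.le] at hclip
  nlinarith [hvu k hk]

lemma ge_of_forall_ge (hw : IsIsotonicRegression s v w) (hu : MonotoneOn u s)
    (huv : ∀ i ∈ s, u i ≤ v i) (hk : k ∈ s) : u k ≤ w k := by
  by_contra! hlt
  have hclip := hw.sq_sub_le_of_forall_sq_sub_le (hw.1.max hu)
    (fun i hi => sq_sub_max_le (huv i hi)) hk
  rw [max_eq_right hlt.le] at hclip
  nlinarith [huv k hk]

lemma abs_sub_le (hw : IsIsotonicRegression s v w) (hu : MonotoneOn u s) {D : ℝ}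
    (hvu : ∀ i ∈ s, |v i - u i| ≤ D) (hk : k ∈ s) : |w k - u k| ≤ D := by
  have hupper := hw.le_of_forall_le (hu.add_const D)
    (fun i hi => by linarith [(abs_sub_le_iff.mp (hvu i hi)).1]) hk
  have hlower := hw.ge_of_forall_ge (hu.add_const (-D))
    (fun i hi => by linarith [(abs_sub_le_iff.mp (hvu i hi)).2]) hk
  exact abs_sub_le_iff.mpr ⟨by linarith, by linarith⟩

end IsIsotonicRegression

lemma monotoneOn_Iio_iff {α : Type*} [Preorder α] {w : ℕ → α} {M : ℕ} :
    MonotoneOn w (Set.Iio M) ↔ ∀ i j, i ≤ j → j < M → w i ≤ w j :=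
  ⟨fun hw _ _ hij hj => hw (hij.trans_lt hj) hj hij, fun hw _ _ _ hj hij => hw _ _ hij hj⟩

lemma exists_le_mem_Icc_apply_succ {α : Type*} [LinearOrder α] (p : ℕ → α) {x : α} (n : ℕ)
    (h₀ : p 0 ≤ x) (hn : x ≤ p (n + 1)) : ∃ j ≤ n, x ∈ Set.Icc (p j) (p (j + 1)) := by
  induction n with
  | zero => exact ⟨0, le_rfl, h₀, hn⟩
  | succ n ih =>
    rcases le_total x (p (n + 1)) with hle | hge
    · obtain ⟨j, hj, hxj⟩ := ih hle
      exact ⟨j, by omega, hxj⟩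
    · exact ⟨n + 1, le_rfl, hge, hn⟩

lemma add_mul_div_sub_mem_Icc {a b x y₀ y₁ : ℝ} (hab : a < b) (hx : x ∈ Set.Icc a b)
    (hy : y₀ ≤ y₁) : y₀ + (x - a) * (y₁ - y₀) / (b - a) ∈ Set.Icc y₀ y₁ := by
  have hba : 0 < b - a := sub_pos.mpr hab
  have hstep : (x - a) * (y₁ - y₀) / (b - a) ≤ y₁ - y₀ := by
    rw [div_le_iff₀ hba]
    nlinarith [hx.2]
  have hstep₀ : 0 ≤ (x - a) * (y₁ - y₀) / (b - a) :=
    div_nonneg (mul_nonneg (by linarith [hx.1]) (by linarith)) hba.le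
  constructor <;> linarith

lemma abs_sub_le_of_mem_Icc {a b c d y z ε D : ℝ} (hy : y ∈ Set.Icc a b)
    (hz : z ∈ Set.Icc c d) (hcd : d - c ≤ ε) (ha : |a - c| ≤ D) (hb : |b - d| ≤ D) :
    |y - z| ≤ ε + D := by
  rw [abs_le] at ha hb ⊢
  constructor <;> linarith [hy.1, hy.2, hz.1, hz.2]

/-- Deterministic core of the consistency of the IOQR estimator (Lemma 3.1 combined with
the interpolation bound from the proof of Theorem 3.2(ii)): if `w` is an isotonic
regression of arbitrary values `vh` and `g` is the linear interpolant of the `w j` at the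
grid points `p j`, then `|g x - f x| ≤ 2ε + 3·max_j |vh j - f (p j)|` on `[p 0, p (M-1)]`. -/
theorem isotonic_interpolant_error_le_two_eps_add_three_max
    (ε : ℝ) (hε : 0 < ε)
    (M : ℕ) (hM : 2 ≤ M)
    (p : ℕ → ℝ) (hp : ∀ j, j + 1 < M → p j < p (j + 1))
    (f : ℝ → ℝ)
    (hf : MonotoneOn f (Set.Icc (p 0) (p (M - 1))))
    (hgap : ∀ j, j + 1 < M → f (p (j + 1)) - f (p j) ≤ ε)
    (vh w : ℕ → ℝ)
    (hw_mono : ∀ i j, i ≤ j → j < M → w i ≤ w j)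
    (hw_min : ∀ w' : ℕ → ℝ, (∀ i j, i ≤ j → j < M → w' i ≤ w' j) →
      ∑ j ∈ Finset.range M, (vh j - w j) ^ 2 ≤ ∑ j ∈ Finset.range M, (vh j - w' j) ^ 2)
    (g : ℝ → ℝ)
    (hg : ∀ j, j + 1 < M → ∀ x ∈ Set.Icc (p j) (p (j + 1)),
      g x = w j + (x - p j) * (w (j + 1) - w j) / (p (j + 1) - p j)) :
    ∀ x ∈ Set.Icc (p 0) (p (M - 1)),
      |g x - f x| ≤ 2 * ε + 3 * ((Finset.range M).sup'
        (Finset.nonempty_range_iff.mpr (by omega)) fun j => |vh j - f (p j)|) := by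
  intro x hx
  set D := (range M).sup' (nonempty_range_iff.mpr (by omega)) fun j => |vh j - f (p j)|
  have hp_mono : MonotoneOn p (Set.Iio M) :=
    monotoneOn_of_le_add_one Set.ordConnected_Iio fun j _ _ hj => (hp j hj).le
  have hp_maps : Set.MapsTo p (Set.Iio M) (Set.Icc (p 0) (p (M - 1))) := fun j (hj : j < M) =>
    ⟨hp_mono (by omega : 0 < M) hj j.zero_le, hp_mono hj (by omega : M - 1 < M) (by omega)⟩
  have hw : IsIsotonicRegression (range M) vh w :=
    ⟨by rwa [coe_range, monotoneOn_Iio_iff],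
      fun w' hw' => hw_min w' (by rwa [coe_range, monotoneOn_Iio_iff] at hw')⟩
  have hdev : ∀ j < M, |w j - f (p j)| ≤ D := fun j hj =>
    hw.abs_sub_le (by rw [coe_range]; exact hf.comp hp_mono hp_maps)
      (fun i hi => le_sup' (fun i => |vh i - f (p i)|) hi) (mem_range.mpr hj)
  obtain ⟨j, hj, hxj⟩ := exists_le_mem_Icc_apply_succ p (M - 2) hx.1
    (by rw [show M - 2 + 1 = M - 1 by omega]; exact hx.2)
  have hj1 : j + 1 < M := by omega
  have hgx := add_mul_div_sub_mem_Icc (hp j hj1) hxj (hw_mono j (j + 1) (by omega) hj1)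
  rw [← hg j hj1 x hxj] at hgx
  have hfx : f x ∈ Set.Icc (f (p j)) (f (p (j + 1))) :=
    (hf.mono (Set.Icc_subset_Icc (hp_maps (by omega : j < M)).1 (hp_maps hj1).2)).mapsTo_Icc hxj
  have hD : 0 ≤ D := (abs_nonneg _).trans (hdev 0 (by omega))
  linarith [abs_sub_le_of_mem_Icc hgx hfx (hgap j hj1) (hdev j (by omega)) (hdev (j + 1) hj1)]
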